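/- Let W = {w₁, …, w_m} ⊆ ℝ^n generate the cone K_W, let L = lineality(K_W) = K_W ∩ (−K_W), and let K_P = L^⊥ ∩ K_W. Let W_{∖L} = {w ∈ W : w ∉ L}. Then the cone generated by the orthogonal projections of the vectors of W_{∖L} onto L^⊥ equals K_P: cone(proj_{L^⊥}(W_{∖L})) = K_P. -/

import Mathlib

/-- The cone generated by a finite family of vectors `w₁, …, w_m` in Euclidean space:
the set of their nonnegative linear combinations. -/
def coneFam {n m : ℕ} (w : Fin m → EuclideanSpace ℝ (Fin n)) :
    Set (EuclideanSpace ℝ (Fin n)) :=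
  {x | ∃ l : Fin m → ℝ, 0 ≤ l ∧ x = ∑ i, l i • w i}

/-!
Write `P` for the orthogonal projection onto `Lᗮ`. Since `v - P v ∈ L` and `L ⊆ K_W`, the projection
`P x = x + (P x - x)` of a point `x ∈ K_W` stays in `K_W`; applied to `x = ∑ lᵢ wᵢ` this puts every
`∑ lᵢ P wᵢ = P x` into `Lᗮ ∩ K_W`. Conversely a point `x = ∑ lᵢ wᵢ` of `Lᗮ ∩ K_W` equals `P x = ∑ lᵢ P wᵢ`,
and the terms with `wᵢ ∈ L` vanish because `P wᵢ = 0` for them.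
-/

open Submodule

section Projection

variable {E ι : Type*} [NormedAddCommGroup E] [InnerProductSpace ℝ E] [Fintype ι]
  (K : Submodule ℝ E) [K.HasOrthogonalProjection]

theorem Submodule.sub_starProjection_orthogonal_mem (v : E) : v - Kᗮ.starProjection v ∈ K := by
  rw [starProjection_orthogonal_val, sub_sub_cancel]
  exact K.starProjection_apply_mem v

theorem Submodule.starProjection_sum_smul (l : ι → ℝ) (w : ι → E) :
    K.starProjection (∑ i, l i • w i) = ∑ i, l i • K.starProjection (w i) := by
  simp only [map_sum, map_smul]

theorem Submodule.sum_ite_mem_smul_starProjection_orthogonal [DecidablePred (· ∈ K)]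
    (l : ι → ℝ) (w : ι → E) :
    ∑ i, (if w i ∈ K then 0 else l i) • Kᗮ.starProjection (w i) =
      ∑ i, l i • Kᗮ.starProjection (w i) := by
  refine Finset.sum_congr rfl fun i _ => ?_
  split_ifs with hi
  · rw [starProjection_orthogonal_apply_eq_zero hi, smul_zero, smul_zero]
  · rfl

end Projection

section Cone

variable {n m : ℕ} {w : Fin m → EuclideanSpace ℝ (Fin n)}

theorem add_mem_coneFam {x y : EuclideanSpace ℝ (Fin n)} (hx : x ∈ coneFam w)
    (hy : y ∈ coneFam w) : x + y ∈ coneFam w := by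
  obtain ⟨l, hl, rfl⟩ := hx
  obtain ⟨l', hl', rfl⟩ := hy
  exact ⟨l + l', add_nonneg hl hl', by simp only [Pi.add_apply, add_smul, Finset.sum_add_distrib]⟩

theorem starProjection_orthogonal_mem_coneFam {L : Submodule ℝ (EuclideanSpace ℝ (Fin n))}
    (hL : (L : Set (EuclideanSpace ℝ (Fin n))) ⊆ coneFam w) {x : EuclideanSpace ℝ (Fin n)}
    (hx : x ∈ coneFam w) : Lᗮ.starProjection x ∈ coneFam w := by
  have hdiff : Lᗮ.starProjection x - x ∈ L := by
    rw [← neg_sub]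
    exact L.neg_mem (L.sub_starProjection_orthogonal_mem x)
  simpa only [add_sub_cancel] using add_mem_coneFam hx (hL hdiff)

end Cone

/-- Let `W = {w₁, …, w_m} ⊆ ℝ^n` generate the cone `K_W`, let
`L = lineality(K_W) = K_W ∩ (−K_W)`, and let `K_P = L^⊥ ∩ K_W`.  Letting `W_{∖L}` be the
vectors of `W` not lying in `L`, the cone generated by the orthogonal projections of the
vectors of `W_{∖L}` onto `L^⊥` equals `K_P`: `cone(proj_{L^⊥}(W_{∖L})) = K_P`. -/
theorem pointed_part_generated_by_projected_nonlineal_points {n m : ℕ}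
    (w : Fin m → EuclideanSpace ℝ (Fin n))
    (L : Submodule ℝ (EuclideanSpace ℝ (Fin n)))
    (hL : (L : Set (EuclideanSpace ℝ (Fin n))) = coneFam w ∩ (-(coneFam w))) :
    {x : EuclideanSpace ℝ (Fin n) | ∃ l : Fin m → ℝ, 0 ≤ l ∧ (∀ i, w i ∈ L → l i = 0) ∧
        x = ∑ i, l i • ((Submodule.orthogonalProjectionOnto Lᗮ (w i) : EuclideanSpace ℝ (Fin n)))} =
      (Lᗮ : Set (EuclideanSpace ℝ (Fin n))) ∩ coneFam w := by
  classical
  simp only [← starProjection_apply]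
  ext x
  constructor
  · rintro ⟨l, hl, -, rfl⟩
    rw [← starProjection_sum_smul]
    exact ⟨Lᗮ.starProjection_apply_mem _,
      starProjection_orthogonal_mem_coneFam (hL ▸ Set.inter_subset_left) ⟨l, hl, rfl⟩⟩
  · rintro ⟨hx, l, hl, rfl⟩
    refine ⟨fun i => if w i ∈ L then 0 else l i,
      fun i => ite_nonneg le_rfl (hl i), fun i hi => if_pos hi, ?_⟩
    rw [sum_ite_mem_smul_starProjection_orthogonal, ← starProjection_sum_smul,
      starProjection_eq_self_iff.mpr hx]
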